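/- arXiv:1610.02175 — 2 statements merged into one kernel-verified Lean document; each statement's English description precedes it below -/
import Mathlib

section
/- Let G be a finite simple graph with n vertices and m edges. The F-coindex of the subdivision graph satisfies F̄(S(G)) = (m+n-1)·M₁(G) - F(G) + 4m(m+n-3). -/
open SimpleGraph Finset
open scoped Classical

noncomputable section
namespace Paper

variable {V : Type*} [Fintype V]

/-- Degree as an integer. -/
def d (G : SimpleGraph V) (v : V) : ℤ := G.degree v

/-- Number of edges. -/
def m (G : SimpleGraph V) : ℤ := G.edgeFinset.card

/-- Sum over unordered edges of a symmetric vertex-pair function. -/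
def edgeSum (G : SimpleGraph V) (f : V → V → ℤ) (hf : ∀ u v, f u v = f v u) : ℤ :=
  ∑ e ∈ G.edgeFinset, Sym2.lift ⟨f, hf⟩ e

/-- First Zagreb index. -/
def M1 (G : SimpleGraph V) : ℤ := ∑ v, d G v ^ 2

/-- Second Zagreb index. -/
def M2 (G : SimpleGraph V) : ℤ :=
  edgeSum G (fun u v => d G u * d G v) (by intros; ring)

/-- F-index. -/
def F (G : SimpleGraph V) : ℤ := ∑ v, d G v ^ 3

/-- ξ₄. -/
def xi4 (G : SimpleGraph V) : ℤ := ∑ v, d G v ^ 4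

/-- Redefined third Zagreb index. -/
def ReZG3 (G : SimpleGraph V) : ℤ :=
  edgeSum G (fun u v => d G u * d G v * (d G u + d G v)) (by intros; ring)

/-- F-coindex: sum over edges of the complement with degrees in G. -/
def Fbar (G : SimpleGraph V) : ℤ :=
  edgeSum Gᶜ (fun u v => d G u ^ 2 + d G v ^ 2) (by intros; ring)

/-- Subdivision graph. -/
def subdivision (G : SimpleGraph V) : SimpleGraph (V ⊕ G.edgeSet) where
  Adj x y :=
    match x, y with
    | Sum.inl u, Sum.inr e => u ∈ (e : Sym2 V)
    | Sum.inr e, Sum.inl u => u ∈ (e : Sym2 V)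
    | _, _ => False
  symm := ⟨by rintro (u | e) (v | f) h <;> first | exact h | exact h.elim⟩
  loopless := ⟨by rintro (u | e) <;> simp⟩

/-- Vertex-semitotal graph. -/
def vertexSemitotal (G : SimpleGraph V) : SimpleGraph (V ⊕ G.edgeSet) where
  Adj x y :=
    match x, y with
    | Sum.inl u, Sum.inl v => G.Adj u v
    | Sum.inl u, Sum.inr e => u ∈ (e : Sym2 V)
    | Sum.inr e, Sum.inl u => u ∈ (e : Sym2 V)
    | _, _ => False
  symm := by
    constructor
    rintro (u | e) (v | f) h
    · exact G.adj_symm h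
    · exact h
    · exact h
    · exact h.elim
  loopless := by
    constructor
    rintro (u | e) h
    · exact G.loopless.irrefl u h
    · exact h

/-- Edge-semitotal graph. -/
def edgeSemitotal (G : SimpleGraph V) : SimpleGraph (V ⊕ G.edgeSet) where
  Adj x y :=
    match x, y with
    | Sum.inl u, Sum.inr e => u ∈ (e : Sym2 V)
    | Sum.inr e, Sum.inl u => u ∈ (e : Sym2 V)
    | Sum.inr e, Sum.inr f => e ≠ f ∧ ∃ v, v ∈ (e : Sym2 V) ∧ v ∈ (f : Sym2 V)
    | _, _ => False
  symm := by
    constructor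
    rintro (u | e) (v | f) h
    · exact h.elim
    · exact h
    · exact h
    · obtain ⟨hne, w, h1, h2⟩ := h
      exact ⟨hne.symm, w, h2, h1⟩
  loopless := by
    constructor
    rintro (u | e) h
    · exact h
    · exact h.1 rfl

/-- Total graph. -/
def total (G : SimpleGraph V) : SimpleGraph (V ⊕ G.edgeSet) where
  Adj x y :=
    match x, y with
    | Sum.inl u, Sum.inl v => G.Adj u v
    | Sum.inl u, Sum.inr e => u ∈ (e : Sym2 V)
    | Sum.inr e, Sum.inl u => u ∈ (e : Sym2 V)
    | Sum.inr e, Sum.inr f => e ≠ f ∧ ∃ v, v ∈ (e : Sym2 V) ∧ v ∈ (f : Sym2 V)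
  symm := by
    constructor
    rintro (u | e) (v | f) h
    · exact G.adj_symm h
    · exact h
    · exact h
    · obtain ⟨hne, w, h1, h2⟩ := h
      exact ⟨hne.symm, w, h2, h1⟩
  loopless := by
    constructor
    rintro (u | e) h
    · exact G.loopless.irrefl u h
    · exact h.1 rfl

/-- Paraline graph: line graph of the subdivision graph. -/
def paraline (G : SimpleGraph V) : SimpleGraph (subdivision G).edgeSet :=
  (subdivision G).lineGraph


end Paper

/-!
In `S(G)` the original vertices keep their degrees and the `m` new ones have degree `2`, so
`M₁(S(G)) = M₁(G) + 4m` and `F(S(G)) = F(G) + 8m`; substitute these and `N = n + m` into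
`F̄(H) = (N - 1) M₁(H) - F(H)`, which holds because each vertex `v` of `H` lies on `N - 1 - d(v)`
edges of the complement.
-/

namespace Paper

variable {V : Type*}

lemma Sym2.lift_add_eq_sum_toFinset {M : Type*} [AddCommMonoid M] [DecidableEq V] (f : V → M)
    {e : Sym2 V} (he : ¬ e.IsDiag) :
    Sym2.lift ⟨fun u v => f u + f v, fun _ _ => add_comm _ _⟩ e = ∑ v ∈ e.toFinset, f v := by
  induction e with
  | _ u w =>
    rw [Sym2.lift_mk, Sym2.toFinset_mk_eq, Finset.sum_pair (by simpa using he)]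

lemma sum_edgeFinset_lift_add {M : Type*} [AddCommMonoid M] [Fintype V] (H : SimpleGraph V)
    (f : V → M) :
    ∑ e ∈ H.edgeFinset, Sym2.lift ⟨fun u v => f u + f v, fun _ _ => add_comm _ _⟩ e
      = ∑ v, H.degree v • f v := by
  rw [Finset.sum_congr rfl fun e he =>
    Sym2.lift_add_eq_sum_toFinset f (H.not_isDiag_of_mem_edgeSet (mem_edgeFinset.mp he))]
  rw [Finset.sum_comm' (t' := univ) (s' := fun v => H.incidenceFinset v)
    (by simp [incidenceFinset_eq_filter])]
  simp only [Finset.sum_const, card_incidenceFinset_eq_degree]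

lemma cast_degree_compl [Fintype V] (H : SimpleGraph V) (v : V) [Fintype (Hᶜ.neighborSet v)] :
    (Hᶜ.degree v : ℤ) = Fintype.card V - 1 - d H v := by
  have := H.degree_lt_card_verts v
  rw [degree_compl, d]
  omega

lemma Fbar_eq [Fintype V] (H : SimpleGraph V) :
    Fbar H = ((Fintype.card V : ℤ) - 1) * M1 H - F H := by
  rw [Fbar, edgeSum, sum_edgeFinset_lift_add, M1, F, Finset.mul_sum, ← Finset.sum_sub_distrib]
  refine Finset.sum_congr rfl fun v _ => ?_
  rw [nsmul_eq_mul, cast_degree_compl]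
  ring

section Subdivision

variable (G : SimpleGraph V)

@[simp] lemma subdivision_adj_inl_inl (u v : V) :
    ¬ (subdivision G).Adj (Sum.inl u) (Sum.inl v) := id

@[simp] lemma subdivision_adj_inl_inr (u : V) (e : G.edgeSet) :
    (subdivision G).Adj (Sum.inl u) (Sum.inr e) ↔ u ∈ (e : Sym2 V) := Iff.rfl

@[simp] lemma subdivision_adj_inr_inl (e : G.edgeSet) (u : V) :
    (subdivision G).Adj (Sum.inr e) (Sum.inl u) ↔ u ∈ (e : Sym2 V) := Iff.rfl

@[simp] lemma subdivision_adj_inr_inr (e f : G.edgeSet) :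
    ¬ (subdivision G).Adj (Sum.inr e) (Sum.inr f) := id

variable [Fintype V]

lemma degree_subdivision_inl (v : V) :
    (subdivision G).degree (Sum.inl v) = G.degree v := by
  rw [← card_neighborFinset_eq_degree, neighborFinset_eq_filter, Finset.card_filter,
    Fintype.sum_sum_type]
  simp only [subdivision_adj_inl_inl, subdivision_adj_inl_inr, if_false, sum_const_zero,
    zero_add, Finset.sum_boole, Nat.cast_id]
  rw [← G.card_incidenceSet_eq_degree, ← Fintype.card_subtype]
  exact Fintype.card_congr (Equiv.subtypeSubtypeEquivSubtypeInter (· ∈ G.edgeSet) (v ∈ ·))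

lemma degree_subdivision_inr (e : G.edgeSet) :
    (subdivision G).degree (Sum.inr e) = 2 := by
  rw [← card_neighborFinset_eq_degree, neighborFinset_eq_filter, Finset.card_filter,
    Fintype.sum_sum_type]
  simp only [subdivision_adj_inr_inr, subdivision_adj_inr_inl, if_false, sum_const_zero,
    add_zero, Finset.sum_boole, Nat.cast_id]
  rw [← Sym2.card_toFinset_of_not_isDiag _ (G.not_isDiag_of_mem_edgeSet e.2)]
  congr 1
  ext
  simp

lemma card_edgeSet_eq_m : (Fintype.card G.edgeSet : ℤ) = m G := by
  rw [m, edgeFinset_card]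

lemma card_subdivision : (Fintype.card (V ⊕ G.edgeSet) : ℤ) = Fintype.card V + m G := by
  rw [Fintype.card_sum, Nat.cast_add, card_edgeSet_eq_m]

lemma sum_d_pow_subdivision (k : ℕ) :
    ∑ x, d (subdivision G) x ^ k = ∑ v, d G v ^ k + 2 ^ k * m G := by
  simp only [Fintype.sum_sum_type, d, degree_subdivision_inl, degree_subdivision_inr,
    Finset.sum_const, Finset.card_univ, nsmul_eq_mul, card_edgeSet_eq_m]
  push_cast
  ring

lemma M1_subdivision : M1 (subdivision G) = M1 G + 4 * m G := by
  rw [M1, M1, sum_d_pow_subdivision]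
  norm_num

lemma F_subdivision : F (subdivision G) = F G + 8 * m G := by
  rw [F, F, sum_d_pow_subdivision]
  norm_num

end Subdivision

theorem stmt11 {V : Type*} [Fintype V] (G : SimpleGraph V) :
    Fbar (subdivision G) =
      (m G + (Fintype.card V : ℤ) - 1) * M1 G - F G +
        4 * m G * (m G + (Fintype.card V : ℤ) - 3) := by
  rw [Fbar_eq, card_subdivision, M1_subdivision, F_subdivision]
  ring

end Paper
end
end

section
/- Let G be a finite simple graph with n vertices and m edges. The F-coindex of the line graph satisfies F̄(L(G)) = (m+5)·F(G) - 4(m+2)·M₁(G) + 2(m+5)·M₂(G) - ξ₄(G) - 3·ReZG₃(G) + 4m(m+1). -/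
open SimpleGraph Finset
open scoped Classical

noncomputable section
namespace Paper

variable {V : Type*} [Fintype V]

/-!
For any graph `H` on `N` vertices, `d_{H̄}(v) = N - 1 - d_H(v)`, so the weighted handshake lemma
gives `F̄(H) = (N - 1) M₁(H) - F(H)`. In `L(G)` there are `m` vertices and the vertex `uv` has
degree `d(u) + d(v) - 2`; expanding `(d(u) + d(v) - 2)^k` for `k = 2, 3` and summing over the
darts of `G` expresses `M₁(L(G))` and `F(L(G))` through `M₁, M₂, F, ξ₄, ReZG₃` and `m`.
-/

section Degrees

variable (H : SimpleGraph V)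

lemma d_compl (v : V) : d Hᶜ v = Fintype.card V - 1 - d H v := by
  have hlt := H.degree_lt_card_verts v
  rw [d, d, H.degree_compl]
  omega

lemma sum_dart_fst (g : V → ℤ) :
    ∑ a : H.Dart, g a.fst = ∑ v, d H v * g v := by
  rw [← sum_fiberwise univ (fun a : H.Dart => a.fst)]
  refine sum_congr rfl fun v _ => ?_
  rw [sum_congr rfl fun a ha => by rw [(mem_filter.1 ha).2], sum_const,
    H.dart_fst_fiber_card_eq_degree, nsmul_eq_mul, d]

lemma sum_dart_snd (g : V → ℤ) :
    ∑ a : H.Dart, g a.snd = ∑ a : H.Dart, g a.fst :=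
  Fintype.sum_equiv (Equiv.mk Dart.symm Dart.symm Dart.symm_symm Dart.symm_symm) _ _ fun _ => rfl

lemma sum_dart_edge (f : H.edgeSet → ℤ) :
    ∑ a : H.Dart, f ⟨a.edge, a.edge_mem⟩ = 2 * ∑ e, f e := by
  rw [← sum_fiberwise univ (fun a : H.Dart => (⟨a.edge, a.edge_mem⟩ : H.edgeSet)), mul_sum]
  refine sum_congr rfl fun e _ => ?_
  have hfiber : #{a : H.Dart | (⟨a.edge, a.edge_mem⟩ : H.edgeSet) = e} = 2 := by
    simp_rw [Subtype.ext_iff]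
    exact H.dart_edge_fiber_card e e.2
  rw [sum_congr rfl fun a ha => by rw [(mem_filter.1 ha).2], sum_const, hfiber, two_nsmul,
    two_mul]

lemma two_mul_edgeSum (f : V → V → ℤ) (hf : ∀ u v, f u v = f v u) :
    2 * edgeSum H f hf = ∑ a : H.Dart, f a.fst a.snd := by
  rw [edgeSum, edgeFinset, ← sum_set_coe (s := H.edgeSet), ← sum_dart_edge]
  rfl

lemma edgeSum_add_eq_sum_degree_mul (g : V → ℤ) (hg : ∀ u v, g u + g v = g v + g u) :
    edgeSum H (fun u v => g u + g v) hg = ∑ v, d H v * g v := by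
  have h := two_mul_edgeSum H _ hg
  rw [sum_add_distrib, sum_dart_snd, sum_dart_fst, ← two_mul] at h
  exact mul_left_cancel₀ two_ne_zero h

lemma sum_dart_degree_pow (k : ℕ) :
    ∑ a : H.Dart, d H a.fst ^ k = ∑ v, d H v ^ (k + 1) := by
  rw [sum_dart_fst H (d H · ^ k)]
  exact sum_congr rfl fun v _ => (pow_succ' _ _).symm

lemma card_dart : (Fintype.card H.Dart : ℤ) = 2 * m H := by
  rw [H.dart_card_eq_twice_card_edges, m]
  push_cast
  rfl

lemma sum_dart_degree : ∑ a : H.Dart, d H a.fst = M1 H := by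
  rw [sum_dart_fst H (d H ·), M1]
  simp only [sq]

lemma sum_dart_degree_sq : ∑ a : H.Dart, d H a.fst ^ 2 = F H :=
  sum_dart_degree_pow H 2

lemma sum_dart_degree_cube : ∑ a : H.Dart, d H a.fst ^ 3 = xi4 H :=
  sum_dart_degree_pow H 3

lemma sum_dart_degree_mul :
    ∑ a : H.Dart, d H a.fst * d H a.snd = 2 * M2 H :=
  (two_mul_edgeSum H (fun u v => d H u * d H v) _).symm

lemma sum_dart_degree_mul_add :
    ∑ a : H.Dart, d H a.fst * d H a.snd * (d H a.fst + d H a.snd) = 2 * ReZG3 H :=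
  (two_mul_edgeSum H (fun u v => d H u * d H v * (d H u + d H v)) _).symm

lemma card_edgeSet : (Fintype.card H.edgeSet : ℤ) = m H := by
  rw [m, edgeFinset_card]

lemma Fbar_eq_M1_sub_F : Fbar H = (Fintype.card V - 1) * M1 H - F H := by
  rw [Fbar, edgeSum_add_eq_sum_degree_mul Hᶜ (d H · ^ 2), M1, F, mul_sum, ← sum_sub_distrib]
  refine sum_congr rfl fun v _ => ?_
  rw [d_compl]
  ring

end Degrees

section LineGraph

variable (G : SimpleGraph V)

lemma map_neighborFinset_lineGraph {u v : V} (h : G.Adj u v) :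
    (G.lineGraph.neighborFinset ⟨s(u, v), h⟩).map (Function.Embedding.subtype _) =
      (G.incidenceFinset u ∪ G.incidenceFinset v).erase s(u, v) := by
  ext f
  simp only [mem_map, mem_neighborFinset, lineGraph_adj_iff_exists, Function.Embedding.coe_subtype,
    mem_erase, mem_union, mem_incidenceFinset, incidenceSet, Set.mem_ofPred_eq]
  constructor
  · rintro ⟨⟨f, hf⟩, ⟨hne, w, hw, hwf⟩, rfl⟩
    refine ⟨fun h' => hne (Subtype.ext h'.symm), ?_⟩
    rcases Sym2.mem_iff.1 hw with rfl | rfl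
    exacts [Or.inl ⟨hf, hwf⟩, Or.inr ⟨hf, hwf⟩]
  · rintro ⟨hne, ⟨hf, hu⟩ | ⟨hf, hv⟩⟩
    · exact ⟨⟨f, hf⟩, ⟨fun h' => hne (congrArg Subtype.val h').symm, u, by simp, hu⟩, rfl⟩
    · exact ⟨⟨f, hf⟩, ⟨fun h' => hne (congrArg Subtype.val h').symm, v, by simp, hv⟩, rfl⟩

lemma lineGraph_degree_add_two {u v : V} (h : G.Adj u v) :
    G.lineGraph.degree ⟨s(u, v), h⟩ + 2 = G.degree u + G.degree v := by
  have hinter : G.incidenceFinset u ∩ G.incidenceFinset v = {s(u, v)} := by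
    rw [← coe_inj, coe_inter, coe_incidenceFinset, coe_incidenceFinset, coe_singleton,
      G.incidenceSet_inter_incidenceSet_of_adj h]
  have hmem : s(u, v) ∈ G.incidenceFinset u ∪ G.incidenceFinset v := by
    simp [h]
  have herase := card_erase_add_one hmem
  have hunion := card_union_add_card_inter (G.incidenceFinset u) (G.incidenceFinset v)
  rw [hinter, card_singleton, card_incidenceFinset_eq_degree,
    card_incidenceFinset_eq_degree] at hunion
  rw [← card_neighborFinset_eq_degree, ← card_map, map_neighborFinset_lineGraph]
  omega

lemma d_lineGraph (a : G.Dart) :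
    d G.lineGraph ⟨a.edge, a.edge_mem⟩ = d G a.fst + d G a.snd - 2 := by
  have h : G.lineGraph.degree ⟨a.edge, a.edge_mem⟩ + 2 = G.degree a.fst + G.degree a.snd :=
    lineGraph_degree_add_two G a.adj
  simp only [d]
  omega

lemma two_mul_sum_lineGraph_degree (f : ℤ → ℤ) :
    2 * ∑ e : G.edgeSet, f (d G.lineGraph e) = ∑ a : G.Dart, f (d G a.fst + d G a.snd - 2) := by
  simp only [← sum_dart_edge, d_lineGraph]

lemma M1_lineGraph : M1 G.lineGraph = F G + 2 * M2 G - 4 * M1 G + 4 * m G := by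
  show ∑ e : G.edgeSet, d G.lineGraph e ^ 2 = _
  have h := two_mul_sum_lineGraph_degree G (· ^ 2)
  have expand : ∀ x y : ℤ, (x + y - 2) ^ 2 = x ^ 2 + y ^ 2 + 2 * (x * y) - 4 * x - 4 * y + 4 :=
    fun x y => by ring
  simp only [expand, sum_add_distrib, sum_sub_distrib, ← mul_sum, sum_dart_snd G (d G · ^ 2),
    sum_dart_snd G (d G ·), sum_dart_degree, sum_dart_degree_sq, sum_dart_degree_mul, sum_const,
    card_univ, card_dart, nsmul_eq_mul] at h
  linarith

lemma F_lineGraph :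
    F G.lineGraph = xi4 G + 3 * ReZG3 G - 6 * F G - 12 * M2 G + 12 * M1 G - 8 * m G := by
  show ∑ e : G.edgeSet, d G.lineGraph e ^ 3 = _
  have h := two_mul_sum_lineGraph_degree G (· ^ 3)
  have expand : ∀ x y : ℤ, (x + y - 2) ^ 3 = x ^ 3 + y ^ 3 + 3 * (x * y * (x + y)) -
      6 * x ^ 2 - 6 * y ^ 2 - 12 * (x * y) + 12 * x + 12 * y - 8 :=
    fun x y => by ring
  simp only [expand, sum_add_distrib, sum_sub_distrib, ← mul_sum, sum_dart_snd G (d G · ^ 3),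
    sum_dart_snd G (d G · ^ 2), sum_dart_snd G (d G ·), sum_dart_degree, sum_dart_degree_sq,
    sum_dart_degree_cube, sum_dart_degree_mul, sum_dart_degree_mul_add, sum_const, card_univ,
    card_dart, nsmul_eq_mul] at h
  linarith

end LineGraph

theorem stmt16 {V : Type*} [Fintype V] (G : SimpleGraph V) :
    Fbar G.lineGraph =
      (m G + 5) * F G - 4 * (m G + 2) * M1 G + 2 * (m G + 5) * M2 G -
        xi4 G - 3 * ReZG3 G + 4 * m G * (m G + 1) := by
  rw [Fbar_eq_M1_sub_F, M1_lineGraph, F_lineGraph, card_edgeSet]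
  ring

end Paper
end
end
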